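/- arXiv:2508.11956 — 8 statements merged into one kernel-verified Lean document; each statement's English description precedes it below -/
import Mathlib

section
/- Let X be a set and ≤↓ a preorder on X × ℝ. Then the following are equivalent: (1) for all p, p', r, r', s, s': if (p,r) ≤↓ (p',r') and max{s'-s, 0} ≤ max{r'-r, 0} then (p,s) ≤↓ (p',s'); (2) ≤↓ is translationally invariant (i.e. (x,a) ≤↓ (y,b) implies (x,a+c) ≤↓ (y,b+c) for all c ∈ ℝ) and contains the product of its projected preorder with the reverse order on ℝ (i.e. if x ≤ y in the projected preorder and b ≤ a, then (x,a) ≤↓ (y,b)), where the projected preorder is defined by x ≤ y iff there exist a,b with (x,a) ≤↓ (y,b). -/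
theorem stmt3 {X : Type*} (R : X × ℝ → X × ℝ → Prop)
    (hrefl : ∀ P, R P P) (htrans : ∀ P Q S, R P Q → R Q S → R P S) :
    (∀ p p' r r' s s', R (p, r) (p', r') → max (s' - s) 0 ≤ max (r' - r) 0 →
        R (p, s) (p', s')) ↔
    ((∀ x y a b c, R (x, a) (y, b) → R (x, a + c) (y, b + c)) ∧
     (∀ x y a b, (∃ a' b', R (x, a') (y, b')) → b ≤ a → R (x, a) (y, b))) := by
  constructor
  · intro h
    constructor
    · intro x y a b c hR
      exact h x y a b (a + c) (b + c) hR (by simp)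
    · rintro x y a b ⟨a', b', hR⟩ hba
      exact h x y a' b' a b hR (by simp [sub_nonpos.2 hba])
  · rintro ⟨htr, hpr⟩ p p' r r' s s' hR hmax
    by_cases hs : s' ≤ s
    · exact hpr p p' s s' ⟨r, r', hR⟩ hs
    · push_neg at hs
      have h1 : s' - s ≤ max (r' - r) 0 := (le_max_left _ _).trans hmax
      have h2 : R (p, r + (s - r)) (p', r' + (s - r)) := htr p p' r r' (s - r) hR
      have h3 : s' ≤ r' + (s - r) := by
        have : s' - s ≤ r' - r := by
          rcases le_or_gt (r' - r) 0 with h | h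
          · linarith [h1.trans (max_le h (le_refl 0))]
          · simpa [max_eq_left h.le] using h1
        linarith
      have h4 : R (p', r' + (s - r)) (p', s') :=
        hpr p' p' (r' + (s - r)) s' ⟨0, 0, hrefl _⟩ h3
      have : R (p, s) (p', r' + (s - r)) := by simpa using h2
      exact htrans _ _ _ this h4
end

section
/- Let (X, 𝒯, ≤, d) be a spacetime (closed preordered space with upper semi-continuous d vanishing outside ≤ and satisfying the reverse triangle inequality). Define on X × ℝ with the product topology the relation (x,a) ≤↓ (y,b) iff x ≤ y and b ≤ a + d(x,y). Then ≤↓ is a preorder whose graph is closed in the product topology of (X × ℝ)². -/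
open scoped ENNReal

/-!
Writing the condition `b ≤ a + d(x, y)` as `b - a ≤ d(x, y)` turns `≤↓` into "`x ≤ y` and the
time gap `b - a` lies below `d(x, y)`". Reflexivity is then `0 ≤ d(x, x)`, transitivity is the
reverse triangle inequality after adding the two gaps, and the graph is closed as the intersection
of the (pulled back) closed graph of `≤` with the pullback of the hypograph of the upper
semicontinuous function `d` under the continuous map `((x, a), (y, b)) ↦ ((x, y), b - a)`.
-/

theorem EReal.coe_le_coe_add_iff_coe_sub_le (a b : ℝ) (e : EReal) :
    (b : EReal) ≤ a + e ↔ ((b - a : ℝ) : EReal) ≤ e := by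
  rw [EReal.coe_sub, EReal.sub_le_iff_le_add (.inl (EReal.coe_ne_bot a))
    (.inl (EReal.coe_ne_top a)), add_comm]

theorem UpperSemicontinuous.isClosed_setOf_le {α γ : Type*} [TopologicalSpace α] [LinearOrder γ]
    [TopologicalSpace γ] [ClosedIicTopology γ] {f g : α → γ} (hf : UpperSemicontinuous f)
    (hg : Continuous g) : IsClosed {x | g x ≤ f x} :=
  hf.IsClosed_hypograph.preimage (continuous_id.prodMk hg)

theorem UpperSemicontinuous.coe_ennreal_ereal {α : Type*} [TopologicalSpace α] {f : α → ℝ≥0∞}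
    (hf : UpperSemicontinuous f) : UpperSemicontinuous fun x => (f x : EReal) :=
  continuous_coe_ennreal_ereal.comp_upperSemicontinuous hf
    fun _ _ => EReal.coe_ennreal_le_coe_ennreal_iff.2

namespace CausalLift

variable {X : Type*} (le : X → X → Prop) (d : X → X → ℝ≥0∞)

/-- The relation `≤↓` on `X × ℝ`, with `b ≤ a + d(x, y)` written as `b - a ≤ d(x, y)`. -/
def Rel (P Q : X × ℝ) : Prop :=
  le P.1 Q.1 ∧ ((Q.2 - P.2 : ℝ) : EReal) ≤ d P.1 Q.1

variable {le d}

theorem rel_iff_le_add (P Q : X × ℝ) :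
    Rel le d P Q ↔ le P.1 Q.1 ∧ (Q.2 : EReal) ≤ (P.2 : EReal) + (d P.1 Q.1 : EReal) :=
  and_congr_right' (EReal.coe_le_coe_add_iff_coe_sub_le _ _ _).symm

theorem rel_refl (hrefl : ∀ x, le x x) (P : X × ℝ) : Rel le d P P :=
  ⟨hrefl P.1, by simpa using EReal.coe_ennreal_nonneg _⟩

theorem rel_trans (htrans : ∀ x y z, le x y → le y z → le x z)
    (hrev : ∀ x y z, le x y → le y z → d x y + d y z ≤ d x z) {P Q S : X × ℝ}
    (hPQ : Rel le d P Q) (hQS : Rel le d Q S) : Rel le d P S := by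
  refine ⟨htrans _ _ _ hPQ.1 hQS.1, ?_⟩
  calc ((S.2 - P.2 : ℝ) : EReal) = ((Q.2 - P.2 : ℝ) : EReal) + ((S.2 - Q.2 : ℝ) : EReal) := by
        rw [← EReal.coe_add, sub_add_sub_cancel']
    _ ≤ (d P.1 Q.1 : EReal) + (d Q.1 S.1 : EReal) := add_le_add hPQ.2 hQS.2
    _ = ((d P.1 Q.1 + d Q.1 S.1 : ℝ≥0∞) : EReal) := (EReal.coe_ennreal_add _ _).symm
    _ ≤ d P.1 S.1 := EReal.coe_ennreal_le_coe_ennreal_iff.2 (hrev _ _ _ hPQ.1 hQS.1)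

theorem isClosed_setOf_rel [TopologicalSpace X] (hclosed : IsClosed {p : X × X | le p.1 p.2})
    (husc : UpperSemicontinuous fun p : X × X => d p.1 p.2) :
    IsClosed {p : (X × ℝ) × (X × ℝ) | Rel le d p.1 p.2} := by
  have hbase : Continuous fun p : (X × ℝ) × (X × ℝ) => (p.1.1, p.2.1) := by fun_prop
  have hgap : Continuous fun p : (X × ℝ) × (X × ℝ) => ((p.2.2 - p.1.2 : ℝ) : EReal) :=
    continuous_coe_real_ereal.comp (by fun_prop)
  exact (hclosed.preimage hbase).inter
    ((husc.comp hbase).coe_ennreal_ereal.isClosed_setOf_le hgap)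

end CausalLift

theorem stmt4_general {X : Type*} [TopologicalSpace X] (le : X → X → Prop)
    (hrefl : ∀ x, le x x) (htrans : ∀ x y z, le x y → le y z → le x z)
    (hclosed : IsClosed {p : X × X | le p.1 p.2})
    (d : X → X → ℝ≥0∞)
    (husc : UpperSemicontinuous (fun p : X × X => d p.1 p.2))
    (hrev : ∀ x y z, le x y → le y z → d x y + d y z ≤ d x z)
    (R : X × ℝ → X × ℝ → Prop)
    (hR : ∀ P Q : X × ℝ, R P Q ↔ le P.1 Q.1 ∧ (Q.2 : EReal) ≤ (P.2 : EReal) + (d P.1 Q.1 : EReal)) :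
    (∀ P, R P P) ∧ (∀ P Q S, R P Q → R Q S → R P S) ∧
    IsClosed {p : (X × ℝ) × (X × ℝ) | R p.1 p.2} := by
  obtain rfl : R = CausalLift.Rel le d :=
    funext₂ fun P Q => propext ((hR P Q).trans (CausalLift.rel_iff_le_add P Q).symm)
  exact ⟨CausalLift.rel_refl hrefl, fun _ _ _ => CausalLift.rel_trans htrans hrev,
    CausalLift.isClosed_setOf_rel hclosed husc⟩

theorem stmt4 {X : Type*} [TopologicalSpace X] (le : X → X → Prop)
    (hrefl : ∀ x, le x x) (htrans : ∀ x y z, le x y → le y z → le x z)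
    (hclosed : IsClosed {p : X × X | le p.1 p.2})
    (d : X → X → ℝ≥0∞)
    (husc : UpperSemicontinuous (fun p : X × X => d p.1 p.2))
    (hvanish : ∀ x y, ¬ le x y → d x y = 0)
    (hrev : ∀ x y z, le x y → le y z → d x y + d y z ≤ d x z)
    (R : X × ℝ → X × ℝ → Prop)
    (hR : ∀ P Q : X × ℝ, R P Q ↔ le P.1 Q.1 ∧ (Q.2 : EReal) ≤ (P.2 : EReal) + (d P.1 Q.1 : EReal)) :
    (∀ P, R P P) ∧ (∀ P Q S, R P Q → R Q S → R P S) ∧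
    IsClosed {p : (X × ℝ) × (X × ℝ) | R p.1 p.2} :=
  stmt4_general le hrefl htrans hclosed d husc hrev R hR
end

section
/- Let (X, 𝒯, ≤, d) be a weakly stably causal spacetime and ≤↓ the associated order on X × ℝ defined by (x,a) ≤↓ (y,b) iff x ≤ y and b ≤ a + d(x,y). Then (X, 𝒯, ≤) is locally convex (every point has a neighborhood basis of ≤-convex sets) if and only if (X × ℝ, product topology, ≤↓) is locally convex. -/
open scoped ENNReal

/- Convexity of a set with respect to a relation: S = i(S) ∩ d(S). -/
def OrdConvex {Y : Type*} (r : Y → Y → Prop) (S : Set Y) : Prop :=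
  ∀ y, (∃ x ∈ S, r x y) → (∃ z ∈ S, r y z) → y ∈ S

def LocallyOrdConvex (Y : Type*) [TopologicalSpace Y] (r : Y → Y → Prop) : Prop :=
  ∀ y : Y, ∀ O ∈ nhds y, ∃ C ∈ nhds y, C ⊆ O ∧ OrdConvex r C

/-!
Every `R`-convex neighbourhood `C` of `(x, 0)` cuts out the `≤`-convex neighbourhood
`{y | (y, 0) ∈ C}` of `x`, because `x ≤ y` implies `(x, 0) R (y, 0)`.

Conversely, by upper semicontinuity of `d` at the diagonal, where `d` vanishes, `x` has a
`≤`-convex neighbourhood `U` on which `d < ε / 2`. The `R`-convex hull of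
`U × (a - ε / 2, a + ε / 2)` is then an `R`-convex neighbourhood of `(x, a)` contained in
`U × (a - ε, a + ε)`: along `(x₀, s) R (y, b) R (z₀, t)` the base point stays in `U` and the
time coordinate moves by less than `ε / 2` in each step.
-/

section OrdConvex

variable {X Y : Type*} {le : X → X → Prop} {r : Y → Y → Prop}

def ordHull (r : Y → Y → Prop) (S : Set Y) : Set Y :=
  {y | (∃ x ∈ S, r x y) ∧ ∃ z ∈ S, r y z}

lemma subset_ordHull (hrefl : ∀ y, r y y) (S : Set Y) : S ⊆ ordHull r S :=
  fun y hy => ⟨⟨y, hy, hrefl y⟩, ⟨y, hy, hrefl y⟩⟩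

lemma ordConvex_ordHull (htrans : ∀ a b c, r a b → r b c → r a c) (S : Set Y) :
    OrdConvex r (ordHull r S) := by
  rintro y ⟨x₀, ⟨⟨x₁, hx₁, hx₁x₀⟩, -⟩, hx₀y⟩ ⟨z₀, ⟨-, ⟨z₁, hz₁, hz₀z₁⟩⟩, hyz₀⟩
  exact ⟨⟨x₁, hx₁, htrans _ _ _ hx₁x₀ hx₀y⟩,
    ⟨z₁, hz₁, htrans _ _ _ hyz₀ hz₀z₁⟩⟩

lemma OrdConvex.preimage {C : Set Y} (hC : OrdConvex r C) {f : X → Y}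
    (hf : ∀ u v, le u v → r (f u) (f v)) : OrdConvex le (f ⁻¹' C) := by
  rintro y ⟨u, hu, huy⟩ ⟨v, hv, hyv⟩
  exact hC (f y) ⟨f u, hu, hf _ _ huy⟩ ⟨f v, hv, hf _ _ hyv⟩

variable [TopologicalSpace X] [TopologicalSpace Y]

lemma LocallyOrdConvex.of_ordHull (hrefl : ∀ y, r y y)
    (htrans : ∀ a b c, r a b → r b c → r a c)
    (h : ∀ y, ∀ O ∈ nhds y, ∃ S ∈ nhds y, ordHull r S ⊆ O) : LocallyOrdConvex Y r := by
  intro y O hO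
  obtain ⟨S, hS, hSO⟩ := h y O hO
  exact ⟨ordHull r S, Filter.mem_of_superset hS (subset_ordHull hrefl S), hSO,
    ordConvex_ordHull htrans S⟩

lemma LocallyOrdConvex.of_isInducing (hY : LocallyOrdConvex Y r) {f : X → Y}
    (hind : Topology.IsInducing f) (hf : ∀ u v, le u v → r (f u) (f v)) :
    LocallyOrdConvex X le := by
  intro x O hO
  obtain ⟨O', hO', hO'O⟩ := (hind.nhds_eq_comap x ▸ hO : O ∈ Filter.comap f (nhds (f x)))
  obtain ⟨C, hC, hCO', hCconv⟩ := hY (f x) O' hO'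
  exact ⟨f ⁻¹' C, hind.continuous.continuousAt.preimage_mem_nhds hC,
    (Set.preimage_mono hCO').trans hO'O, hCconv.preimage hf⟩

end OrdConvex

section LiftOrder

variable {X : Type*} {le : X → X → Prop} {d : X → X → ℝ≥0∞}

/-- The order `≤↓` on `X × ℝ`. -/
def liftOrder (le : X → X → Prop) (d : X → X → ℝ≥0∞) (P Q : X × ℝ) : Prop :=
  le P.1 Q.1 ∧ (Q.2 : EReal) ≤ P.2 + d P.1 Q.1

lemma liftOrder_refl (hrefl : ∀ x, le x x) (hdiag : ∀ x, d x x = 0) (P : X × ℝ) :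
    liftOrder le d P P := by
  simp [liftOrder, hrefl, hdiag]

lemma liftOrder_trans (htrans : ∀ x y z, le x y → le y z → le x z)
    (hrev : ∀ x y z, le x y → le y z → d x y + d y z ≤ d x z) (P Q S : X × ℝ)
    (hPQ : liftOrder le d P Q) (hQS : liftOrder le d Q S) : liftOrder le d P S := by
  refine ⟨htrans _ _ _ hPQ.1 hQS.1, ?_⟩
  calc (S.2 : EReal) ≤ Q.2 + d Q.1 S.1 := hQS.2
    _ ≤ (P.2 + d P.1 Q.1) + d Q.1 S.1 := by gcongr; exact hPQ.2
    _ = P.2 + ((d P.1 Q.1 + d Q.1 S.1 : ℝ≥0∞) : EReal) := by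
      rw [EReal.coe_ennreal_add, add_assoc]
    _ ≤ P.2 + d P.1 S.1 := by
      gcongr; exact EReal.coe_ennreal_le_coe_ennreal_iff.2 (hrev _ _ _ hPQ.1 hQS.1)

lemma liftOrder_prodMk_zero {x y : X} (hxy : le x y) : liftOrder le d (x, 0) (y, 0) :=
  ⟨hxy, by simpa using EReal.coe_ennreal_nonneg (d x y)⟩

lemma lt_add_of_le_add_ennreal {b s δ : ℝ} {e : ℝ≥0∞} (h : (b : EReal) ≤ s + e)
    (he : e < ENNReal.ofReal δ) : b < s + δ := by
  have he' : (e.toReal : EReal) = e := by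
    rw [← EReal.toReal_coe_ennreal]
    exact EReal.coe_toReal (by simp [he.ne_top]) (by simp)
  rw [← he', ← EReal.coe_add] at h
  linarith [EReal.coe_le_coe_iff.1 h, ENNReal.toReal_lt_of_lt_ofReal he]

lemma ordHull_prod_ball_subset {U : Set X} (hU : OrdConvex le U) {δ : ℝ}
    (hd : ∀ y ∈ U, ∀ z ∈ U, d y z < ENNReal.ofReal δ) (a : ℝ) :
    ordHull (liftOrder le d) (U ×ˢ Metric.ball a δ) ⊆ U ×ˢ Metric.ball a (2 * δ) := by
  rintro ⟨y, b⟩ ⟨⟨⟨x₀, s⟩, ⟨hx₀, hs⟩, hx₀y, hsb⟩, ⟨⟨z₀, t⟩, ⟨hz₀, ht⟩, hyz₀, hbt⟩⟩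
  have hy : y ∈ U := hU y ⟨x₀, hx₀, hx₀y⟩ ⟨z₀, hz₀, hyz₀⟩
  have hb_up : b < s + δ := lt_add_of_le_add_ennreal hsb (hd x₀ hx₀ y hy)
  have ht_up : t < b + δ := lt_add_of_le_add_ennreal hbt (hd y hy z₀ hz₀)
  rw [Metric.mem_ball, Real.dist_eq, abs_lt] at hs ht
  refine ⟨hy, ?_⟩
  rw [Metric.mem_ball, Real.dist_eq, abs_lt]
  constructor <;> linarith

variable [TopologicalSpace X]

lemma exists_nhds_forall_lt_of_upperSemicontinuous
    (husc : UpperSemicontinuous (fun p : X × X => d p.1 p.2)) {x : X} {c : ℝ≥0∞}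
    (hc : d x x < c) : ∃ V ∈ nhds x, ∀ y ∈ V, ∀ z ∈ V, d y z < c := by
  have h := husc (x, x) c hc
  rw [nhds_prod_eq] at h
  exact Filter.eventually_prod_self_iff.1 h

lemma LocallyOrdConvex.liftOrder (hX : LocallyOrdConvex X le) (hrefl : ∀ x, le x x)
    (htrans : ∀ x y z, le x y → le y z → le x z)
    (husc : UpperSemicontinuous (fun p : X × X => d p.1 p.2))
    (hrev : ∀ x y z, le x y → le y z → d x y + d y z ≤ d x z) (hdiag : ∀ x, d x x = 0) :
    LocallyOrdConvex (X × ℝ) (liftOrder le d) := by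
  refine .of_ordHull (liftOrder_refl hrefl hdiag) (liftOrder_trans htrans hrev) ?_
  rintro ⟨x, a⟩ O hO
  obtain ⟨U, hU, I, hI, hUI⟩ := mem_nhds_prod_iff.1 hO
  obtain ⟨ε, hε, hεI⟩ := Metric.mem_nhds_iff.1 hI
  obtain ⟨V, hV, hVd⟩ := exists_nhds_forall_lt_of_upperSemicontinuous husc
    (c := ENNReal.ofReal (ε / 2)) (by simpa [hdiag] using hε)
  obtain ⟨U', hU', hU'UV, hU'conv⟩ := hX x (U ∩ V) (Filter.inter_mem hU hV)
  refine ⟨U' ×ˢ Metric.ball a (ε / 2),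
    prod_mem_nhds hU' (Metric.ball_mem_nhds _ (by linarith)), ?_⟩
  refine (ordHull_prod_ball_subset hU'conv (fun y hy z hz => hVd y (hU'UV hy).2 z (hU'UV hz).2)
    a).trans ?_
  rw [mul_div_cancel₀ _ two_ne_zero]
  exact (Set.prod_mono (fun y hy => (hU'UV hy).1) hεI).trans hUI

end LiftOrder

theorem stmt6_general {X : Type*} [TopologicalSpace X] (le : X → X → Prop)
    (hrefl : ∀ x, le x x) (htrans : ∀ x y z, le x y → le y z → le x z)
    (d : X → X → ℝ≥0∞)
    (husc : UpperSemicontinuous (fun p : X × X => d p.1 p.2))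
    (hrev : ∀ x y z, le x y → le y z → d x y + d y z ≤ d x z)
    (hdiag : ∀ x, d x x = 0)
    (R : X × ℝ → X × ℝ → Prop)
    (hR : ∀ P Q : X × ℝ, R P Q ↔ le P.1 Q.1 ∧ (Q.2 : EReal) ≤ (P.2 : EReal) + (d P.1 Q.1 : EReal)) :
    LocallyOrdConvex X le ↔ LocallyOrdConvex (X × ℝ) R := by
  obtain rfl : R = liftOrder le d := by
    ext P Q
    exact hR P Q
  exact ⟨fun hX => hX.liftOrder hrefl htrans husc hrev hdiag,
    fun hXR => hXR.of_isInducing (isEmbedding_prodMkLeft 0).isInducing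
      fun _ _ => liftOrder_prodMk_zero⟩

theorem stmt6 {X : Type*} [TopologicalSpace X] (le : X → X → Prop)
    (hrefl : ∀ x, le x x) (htrans : ∀ x y z, le x y → le y z → le x z)
    (hanti : ∀ x y, le x y → le y x → x = y)
    (hclosed : IsClosed {p : X × X | le p.1 p.2})
    (d : X → X → ℝ≥0∞)
    (husc : UpperSemicontinuous (fun p : X × X => d p.1 p.2))
    (hvanish : ∀ x y, ¬ le x y → d x y = 0)
    (hrev : ∀ x y z, le x y → le y z → d x y + d y z ≤ d x z)
    (hdiag : ∀ x, d x x = 0)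
    (R : X × ℝ → X × ℝ → Prop)
    (hR : ∀ P Q : X × ℝ, R P Q ↔ le P.1 Q.1 ∧ (Q.2 : EReal) ≤ (P.2 : EReal) + (d P.1 Q.1 : EReal)) :
    LocallyOrdConvex X le ↔ LocallyOrdConvex (X × ℝ) R :=
  stmt6_general le hrefl htrans d husc hrev hdiag R hR
end

section
/- Let (X, 𝒯, ≤, d) be a weakly stably causal spacetime and ≤↓ the lifted order on X × ℝ. The following are equivalent: (i) for every p, q ∈ X the set J(p,q) := {r : p ≤ r and r ≤ q} is compact and d is everywhere finite; (ii) for every P, Q ∈ X × ℝ the diamond J↓(P,Q) := {R : P ≤↓ R and R ≤↓ Q} is compact. -/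
open scoped ENNReal
open scoped NNReal

open Set

/-- Precomposition of an upper semicontinuous function with a continuous map
is upper semicontinuous. -/
lemma aux_usc_comp {X Y γ : Type*} [TopologicalSpace X] [TopologicalSpace Y] [LinearOrder γ]
    {f : Y → γ} (hf : UpperSemicontinuous f) {g : X → Y} (hg : Continuous g) :
    UpperSemicontinuous fun x => f (g x) := by
  rw [upperSemicontinuous_iff_isOpen_preimage]
  intro y
  exact (hf.isOpen_preimage y).preimage hg

/-- An everywhere finite usc `ℝ≥0∞`-valued function has usc `toReal`. -/
lemma aux_usc_toReal {X : Type*} [TopologicalSpace X] {f : X → ℝ≥0∞}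
    (hf : UpperSemicontinuous f) (hfin : ∀ x, f x ≠ ⊤) :
    UpperSemicontinuous fun x => (f x).toReal := by
  rw [upperSemicontinuous_iff_isOpen_preimage]
  intro y
  rcases le_or_gt y 0 with hy | hy
  · convert isOpen_empty
    ext x
    simp only [mem_preimage, mem_Iio, mem_empty_iff_false, iff_false, not_lt]
    exact le_trans hy ENNReal.toReal_nonneg
  · convert hf.isOpen_preimage (ENNReal.ofReal y) using 1
    ext x
    simp only [mem_preimage, mem_Iio]
    exact (ENNReal.lt_ofReal_iff_toReal_lt (hfin x)).symm

/-- A usc, everywhere finite `ℝ≥0∞`-valued function is bounded on compacts. -/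
lemma aux_usc_bdd {X : Type*} [TopologicalSpace X] {f : X → ℝ≥0∞}
    (hf : UpperSemicontinuous f) (hfin : ∀ x, f x ≠ ⊤) {K : Set X} (hK : IsCompact K) :
    ∃ M : ℝ, ∀ x ∈ K, (f x).toReal ≤ M := by
  obtain ⟨t, ht⟩ := hK.elim_finite_subcover (fun n : ℕ => {x | f x < (n : ℝ≥0∞)})
    (fun n => hf.isOpen_preimage _)
    (fun x _ => by
      obtain ⟨n, hn⟩ := ENNReal.exists_nat_gt (hfin x)
      exact mem_iUnion.2 ⟨n, hn⟩)
  refine ⟨(t.sup id : ℕ), fun x hx => ?_⟩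
  rcases mem_iUnion₂.1 (ht hx) with ⟨n, hn, hxn⟩
  have h1 : (f x).toReal ≤ (n : ℝ) := by
    have h2 := ENNReal.toReal_mono (by simp) hxn.le
    simpa using h2
  exact h1.trans (by exact_mod_cast Finset.le_sup (f := id) hn)

/-- Converting the `EReal` inequality to a real one when `d` is finite. -/
lemma aux_conv (t a : ℝ) (c : ℝ≥0∞) (hc : c ≠ ⊤) :
    (t : EReal) ≤ (a : EReal) + (c : EReal) ↔ t ≤ a + c.toReal := by
  lift c to ℝ≥0 using hc
  rw [ENNReal.coe_toReal, EReal.coe_nnreal_eq_coe_real, ← EReal.coe_add,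
    EReal.coe_le_coe_iff]

theorem stmt7 {X : Type*} [TopologicalSpace X] (le : X → X → Prop)
    (hrefl : ∀ x, le x x) (htrans : ∀ x y z, le x y → le y z → le x z)
    (hanti : ∀ x y, le x y → le y x → x = y)
    (hclosed : IsClosed {p : X × X | le p.1 p.2})
    (d : X → X → ℝ≥0∞)
    (husc : UpperSemicontinuous (fun p : X × X => d p.1 p.2))
    (hvanish : ∀ x y, ¬ le x y → d x y = 0)
    (hrev : ∀ x y z, le x y → le y z → d x y + d y z ≤ d x z)
    (hdiag : ∀ x, d x x = 0)
    (R : X × ℝ → X × ℝ → Prop)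
    (hR : ∀ P Q : X × ℝ, R P Q ↔ le P.1 Q.1 ∧ (Q.2 : EReal) ≤ (P.2 : EReal) + (d P.1 Q.1 : EReal)) :
    ((∀ p q : X, IsCompact {r : X | le p r ∧ le r q}) ∧ (∀ x y, d x y ≠ ⊤)) ↔
    (∀ P Q : X × ℝ, IsCompact {S : X × ℝ | R P S ∧ R S Q}) := by
  constructor
  · rintro ⟨hJ, hfin⟩ ⟨p, a⟩ ⟨q, b⟩
    -- real-valued distance functions from `p` and to `q`
    set F : X → ℝ := fun r => (d p r).toReal with hF
    set G : X → ℝ := fun r => (d r q).toReal with hG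
    have hdp : UpperSemicontinuous fun r => d p r :=
      aux_usc_comp husc (Continuous.prodMk_right p)
    have hdq : UpperSemicontinuous fun r => d r q :=
      aux_usc_comp husc (Continuous.prodMk_left q)
    have hFusc : UpperSemicontinuous F := aux_usc_toReal hdp fun r => hfin p r
    have hGusc : UpperSemicontinuous G := aux_usc_toReal hdq fun r => hfin r q
    set K : Set X := {r : X | le p r ∧ le r q} with hKdef
    have hK : IsCompact K := hJ p q
    obtain ⟨M, hM⟩ := aux_usc_bdd hdp (fun r => hfin p r) hK
    obtain ⟨N, hN⟩ := aux_usc_bdd hdq (fun r => hfin r q) hK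
    -- description of the diamond by real inequalities
    have hset : {S : X × ℝ | R (p, a) S ∧ R S (q, b)} =
        {S : X × ℝ | le p S.1} ∩ {S : X × ℝ | le S.1 q} ∩
        {S : X × ℝ | 0 ≤ a + F S.1 + (-S.2)} ∩ {S : X × ℝ | b ≤ S.2 + G S.1} := by
      ext S
      simp only [hR, mem_setOf_eq, mem_inter_iff]
      constructor
      · rintro ⟨⟨h1, h2⟩, ⟨h3, h4⟩⟩
        have e2 := (aux_conv S.2 a (d p S.1) (hfin p S.1)).1 h2
        have e4 := (aux_conv b S.2 (d S.1 q) (hfin S.1 q)).1 h4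
        exact ⟨⟨⟨h1, h3⟩, by simp only [hF]; linarith⟩, e4⟩
      · rintro ⟨⟨⟨h1, h3⟩, h2⟩, h4⟩
        have e2 : S.2 ≤ a + (d p S.1).toReal := by simp only [hF] at h2; linarith
        exact ⟨⟨h1, (aux_conv S.2 a (d p S.1) (hfin p S.1)).2 e2⟩,
          ⟨h3, (aux_conv b S.2 (d S.1 q) (hfin S.1 q)).2 h4⟩⟩
    have hA : IsClosed {S : X × ℝ | le p S.1} :=
      hclosed.preimage (Continuous.comp (Continuous.prodMk_right p) continuous_fst)
    have hB : IsClosed {S : X × ℝ | le S.1 q} :=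
      hclosed.preimage (Continuous.comp (Continuous.prodMk_left q) continuous_fst)
    have hCusc : UpperSemicontinuous fun S : X × ℝ => a + F S.1 + (-S.2) := by
      refine UpperSemicontinuous.add (UpperSemicontinuous.add ?_ ?_) ?_
      · exact (continuous_const (y := a)).upperSemicontinuous
      · exact aux_usc_comp hFusc continuous_fst
      · exact (continuous_snd.neg).upperSemicontinuous
    have hDusc : UpperSemicontinuous fun S : X × ℝ => S.2 + G S.1 := by
      refine UpperSemicontinuous.add continuous_snd.upperSemicontinuous ?_
      exact aux_usc_comp hGusc continuous_fst
    have hC : IsClosed {S : X × ℝ | 0 ≤ a + F S.1 + (-S.2)} := by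
      have h0 : IsClosed ((fun S : X × ℝ => a + F S.1 + (-S.2)) ⁻¹' Iio 0)ᶜ :=
        (hCusc.isOpen_preimage 0).isClosed_compl
      convert h0 using 1
      ext S; simp [not_lt]
    have hD : IsClosed {S : X × ℝ | b ≤ S.2 + G S.1} := by
      have h0 : IsClosed ((fun S : X × ℝ => S.2 + G S.1) ⁻¹' Iio b)ᶜ :=
        (hDusc.isOpen_preimage b).isClosed_compl
      convert h0 using 1
      ext S; simp [not_lt]
    have hclosed' : IsClosed {S : X × ℝ | R (p, a) S ∧ R S (q, b)} := by
      rw [hset]; exact ((hA.inter hB).inter hC).inter hD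
    -- the diamond is contained in a compact box
    have hsub : {S : X × ℝ | R (p, a) S ∧ R S (q, b)} ⊆ K ×ˢ Icc (b - N) (a + M) := by
      rw [hset]
      rintro S ⟨⟨⟨h1, h3⟩, h2⟩, h4⟩
      have hSK : S.1 ∈ K := ⟨h1, h3⟩
      refine ⟨hSK, ?_, ?_⟩
      · have := hN S.1 hSK
        simp only [hG, mem_setOf_eq] at h4
        linarith
      · have := hM S.1 hSK
        simp only [hF, mem_setOf_eq] at h2
        linarith
    exact IsCompact.of_isClosed_subset (hK.prod isCompact_Icc) hclosed' hsub
  · intro h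
    have key : ∀ p q : X, ∀ t : ℝ, 0 ≤ t → le p q → (t : EReal) ≤ ((0 : ℝ) : EReal) + (d p q : EReal) →
        ((q, t) : X × ℝ) ∈ {S : X × ℝ | R (p, 0) S ∧ R S (q, 0)} := by
      intro p q t ht hpq hle
      refine ⟨(hR _ _).2 ⟨hpq, hle⟩, (hR _ _).2 ⟨hrefl q, ?_⟩⟩
      simp only [hdiag q, EReal.coe_ennreal_zero, add_zero, EReal.coe_zero]
      exact_mod_cast ht
    constructor
    · intro p q
      have hc := h (p, 0) (q, 0)
      have hc2 : IsCompact ({S : X × ℝ | R (p, 0) S ∧ R S (q, 0)} ∩ (univ ×ˢ ({0} : Set ℝ))) :=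
        hc.inter_right (isClosed_univ.prod isClosed_singleton)
      have himg : {r : X | le p r ∧ le r q} =
          Prod.fst '' ({S : X × ℝ | R (p, 0) S ∧ R S (q, 0)} ∩ (univ ×ˢ ({0} : Set ℝ))) := by
        ext r
        simp only [mem_setOf_eq, mem_image, mem_inter_iff, mem_prod, mem_univ, true_and,
          mem_singleton_iff]
        constructor
        · rintro ⟨h1, h2⟩
          refine ⟨(r, 0), ⟨⟨(hR _ _).2 ⟨h1, ?_⟩, (hR _ _).2 ⟨h2, ?_⟩⟩, rfl⟩, rfl⟩
          · simp only [EReal.coe_zero, zero_add]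
            exact EReal.coe_ennreal_nonneg _
          · simp only [EReal.coe_zero, zero_add]
            exact EReal.coe_ennreal_nonneg _
        · rintro ⟨S, ⟨⟨hS1, hS2⟩, _⟩, rfl⟩
          exact ⟨((hR _ _).1 hS1).1, ((hR _ _).1 hS2).1⟩
      rw [himg]
      exact hc2.image continuous_fst
    · intro x y htop
      have hxy : le x y := by
        by_contra hn
        rw [hvanish x y hn] at htop
        simp at htop
      have hc := h (x, 0) (y, 0)
      have hbdd : BddAbove (Prod.snd '' {S : X × ℝ | R (x, 0) S ∧ R S (y, 0)}) :=
        (hc.image continuous_snd).bddAbove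
      obtain ⟨M, hM⟩ := hbdd
      have hmem : ∀ t : ℝ, 0 ≤ t → t ∈ Prod.snd '' {S : X × ℝ | R (x, 0) S ∧ R S (y, 0)} := by
        intro t ht
        refine ⟨(y, t), key x y t ht hxy ?_, rfl⟩
        rw [htop]
        simp [EReal.coe_ennreal_top]
      have h1 := hM (hmem (max M 0 + 1) (by positivity))
      have h2 : M ≤ max M 0 := le_max_left _ _
      linarith
end

section
/- Let (X, 𝒯, ≤, d) be a weakly stably causal spacetime and ≤↓ the lifted order on X × ℝ. The following are equivalent: (i) for every compact C ⊆ X the set J(C) := i(C) ∩ d(C) (where i(C) is the set of points above some point of C and d(C) the set below some point of C) is compact, and d is finite; (ii) for every compact K ⊆ X × ℝ the set J↓(K) := i↓(K) ∩ d↓(K) is compact. -/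
/-!
Both directions compare `J↓(K)` with the diamond `J(C)` of the projection `C = π K`. If the
diamonds of `X` are compact and `d` is finite, the upper semicontinuous `d` is bounded, say by
`M`, on the compact `J(C) × J(C)`; then `J↓(K)` is a closed subset of `J(C) × [a - M, b + M]`,
where `[a, b]` contains the time coordinates of `K`. Conversely, `J(C)` is the projection of
`J↓(C × {0})`, and if `d x y = ⊤` then `J↓({(x, 0), (y, 0)})` contains every `(y, t)` with
`t ≥ 0`, so it is unbounded.
-/

open scoped ENNReal NNReal
open Set

section Topology

variable {α β : Type*} [TopologicalSpace α] [TopologicalSpace β]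

theorem isClosed_setOf_le_of_lowerSemicontinuous_of_upperSemicontinuous
    {γ : Type*} [LinearOrder γ] [DenselyOrdered γ] {f g : α → γ}
    (hf : LowerSemicontinuous f) (hg : UpperSemicontinuous g) : IsClosed {a | f a ≤ g a} := by
  simp only [← isOpen_compl_iff, compl_ofPred, not_le]
  refine isOpen_iff_mem_nhds.2 fun a ha => ?_
  obtain ⟨c, hgc, hcf⟩ := exists_between ha
  filter_upwards [hg a c hgc, hf a c hcf] with b hgb hcb using hgb.trans hcb

theorem IsCompact.isClosed_setOf_exists_rel {r : α → β → Prop}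
    (hr : IsClosed {p : α × β | r p.1 p.2}) {K : Set α} (hK : IsCompact K) :
    IsClosed {b | ∃ a ∈ K, r a b} := by
  have := isCompact_iff_compactSpace.1 hK
  have himage : {b | ∃ a ∈ K, r a b} = Prod.snd '' {p : K × β | r p.1 p.2} := by
    ext b; simp
  rw [himage]
  exact isClosedMap_snd_of_compactSpace _
    (hr.preimage (f := fun p : K × β => ((p.1 : α), p.2)) (by fun_prop))

theorem IsCompact.exists_forall_le_coe_of_upperSemicontinuous {f : α → ℝ≥0∞}
    (hf : UpperSemicontinuous f) (hfin : ∀ a, f a ≠ ⊤) {s : Set α} (hs : IsCompact s) :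
    ∃ M : ℝ≥0, ∀ a ∈ s, f a ≤ M := by
  rcases s.eq_empty_or_nonempty with rfl | hne
  · exact ⟨0, by simp⟩
  obtain ⟨a, -, ha⟩ := (hf.upperSemicontinuousOn s).exists_isMaxOn hne hs
  exact ⟨(f a).toNNReal, fun b hb => by rw [ENNReal.coe_toNNReal (hfin a)]; exact ha hb⟩

end Topology

def causalDiamond {α : Type*} (r : α → α → Prop) (K : Set α) : Set α :=
  {y | (∃ x ∈ K, r x y) ∧ ∃ z ∈ K, r y z}

theorem IsCompact.isClosed_causalDiamond {α : Type*} [TopologicalSpace α] {r : α → α → Prop}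
    (hr : IsClosed {p : α × α | r p.1 p.2}) {K : Set α} (hK : IsCompact K) :
    IsClosed (causalDiamond r K) :=
  (hK.isClosed_setOf_exists_rel hr).inter
    (hK.isClosed_setOf_exists_rel (r := flip r) (hr.preimage continuous_swap))

-- `ENNReal.ofReal` truncates at `0`, which covers the case `t < s` where both sides hold.
theorem EReal.coe_le_coe_add_coe_ennreal_iff {s t : ℝ} {e : ℝ≥0∞} :
    (t : EReal) ≤ s + e ↔ ENNReal.ofReal (t - s) ≤ e := by
  induction e with
  | top => simp
  | coe c =>
    rw [ENNReal.ofReal_le_iff_le_toReal ENNReal.coe_ne_top, ENNReal.coe_toReal, sub_le_iff_le_add',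
      show ((c : ℝ≥0∞) : EReal) = ((c : ℝ) : EReal) from rfl]
    norm_cast

section LiftedOrder

variable {X : Type*} (le : X → X → Prop) (d : X → X → ℝ≥0∞)

def LiftedLE (P Q : X × ℝ) : Prop :=
  le P.1 Q.1 ∧ (Q.2 : EReal) ≤ P.2 + d P.1 Q.1

variable {le d}

theorem liftedLE_iff {P Q : X × ℝ} :
    LiftedLE le d P Q ↔ le P.1 Q.1 ∧ ENNReal.ofReal (Q.2 - P.2) ≤ d P.1 Q.1 :=
  and_congr_right' EReal.coe_le_coe_add_coe_ennreal_iff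

theorem liftedLE_of_le_of_le {x y : X} {s t : ℝ} (hxy : le x y) (hts : t ≤ s) :
    LiftedLE le d (x, s) (y, t) :=
  liftedLE_iff.2 ⟨hxy, by simp [ENNReal.ofReal_of_nonpos (sub_nonpos.2 hts)]⟩

theorem liftedLE_of_eq_top {x y : X} {s t : ℝ} (hxy : le x y) (hd : d x y = ⊤) :
    LiftedLE le d (x, s) (y, t) :=
  liftedLE_iff.2 ⟨hxy, by simp [hd]⟩

theorem LiftedLE.snd_le_add {P Q : X × ℝ} (h : LiftedLE le d P Q) {M : ℝ≥0}
    (hM : d P.1 Q.1 ≤ M) : Q.2 ≤ P.2 + M := by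
  have := (ENNReal.ofReal_le_iff_le_toReal ENNReal.coe_ne_top).1 ((liftedLE_iff.1 h).2.trans hM)
  rw [ENNReal.coe_toReal] at this
  linarith

theorem causalDiamond_eq_image_fst_causalDiamond_liftedLE (C : Set X) :
    causalDiamond le C = Prod.fst '' causalDiamond (LiftedLE le d) (C ×ˢ {0}) := by
  ext y
  constructor
  · rintro ⟨⟨x, hx, hxy⟩, z, hz, hyz⟩
    exact ⟨(y, 0), ⟨⟨(x, 0), ⟨hx, rfl⟩, liftedLE_of_le_of_le hxy le_rfl⟩,
      (z, 0), ⟨hz, rfl⟩, liftedLE_of_le_of_le hyz le_rfl⟩, rfl⟩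
  · rintro ⟨Q, ⟨⟨P, ⟨hP, -⟩, hPQ⟩, S, ⟨hS, -⟩, hQS⟩, rfl⟩
    exact ⟨⟨P.1, hP, hPQ.1⟩, S.1, hS, hQS.1⟩

variable [TopologicalSpace X]

theorem isClosed_liftedLE (hclosed : IsClosed {p : X × X | le p.1 p.2})
    (husc : UpperSemicontinuous (fun p : X × X => d p.1 p.2)) :
    IsClosed {p : (X × ℝ) × (X × ℝ) | LiftedLE le d p.1 p.2} := by
  simp only [liftedLE_iff, ofPred_and]
  exact (hclosed.preimage (f := fun p : (X × ℝ) × (X × ℝ) => (p.1.1, p.2.1)) (by fun_prop)).inter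
    (isClosed_setOf_le_of_lowerSemicontinuous_of_upperSemicontinuous
      (f := fun p : (X × ℝ) × (X × ℝ) => ENNReal.ofReal (p.2.2 - p.1.2))
      (ENNReal.continuous_ofReal.comp (by fun_prop)).lowerSemicontinuous
      (husc.comp (g := fun p : (X × ℝ) × (X × ℝ) => (p.1.1, p.2.1)) (by fun_prop)))

theorem isCompact_causalDiamond_liftedLE (hrefl : ∀ x, le x x)
    (hclosed : IsClosed {p : X × X | le p.1 p.2})
    (husc : UpperSemicontinuous (fun p : X × X => d p.1 p.2))
    (hJ : ∀ C : Set X, IsCompact C → IsCompact (causalDiamond le C)) (hfin : ∀ x y, d x y ≠ ⊤)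
    {K : Set (X × ℝ)} (hK : IsCompact K) : IsCompact (causalDiamond (LiftedLE le d) K) := by
  set C := Prod.fst '' K
  have hJC : IsCompact (causalDiamond le C) := hJ C (hK.image continuous_fst)
  have hCJ : C ⊆ causalDiamond le C := fun x hx => ⟨⟨x, hx, hrefl x⟩, x, hx, hrefl x⟩
  obtain ⟨M, hM⟩ := (hJC.prod hJC).exists_forall_le_coe_of_upperSemicontinuous husc
    (fun p => hfin p.1 p.2)
  obtain ⟨a, ha⟩ := (hK.image continuous_snd).bddBelow
  obtain ⟨b, hb⟩ := (hK.image continuous_snd).bddAbove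
  refine (hJC.prod (isCompact_Icc (a := a - M) (b := b + M))).of_isClosed_subset
    (hK.isClosed_causalDiamond (isClosed_liftedLE hclosed husc)) ?_
  rintro Q ⟨⟨P, hP, hPQ⟩, S, hS, hQS⟩
  have hPC : P.1 ∈ C := mem_image_of_mem _ hP
  have hSC : S.1 ∈ C := mem_image_of_mem _ hS
  have hQJ : Q.1 ∈ causalDiamond le C := ⟨⟨P.1, hPC, hPQ.1⟩, S.1, hSC, hQS.1⟩
  have hup := hPQ.snd_le_add (hM (P.1, Q.1) ⟨hCJ hPC, hQJ⟩)
  have hlow := hQS.snd_le_add (hM (Q.1, S.1) ⟨hQJ, hCJ hSC⟩)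
  exact ⟨hQJ, by linarith [ha (mem_image_of_mem _ hS)], by linarith [hb (mem_image_of_mem _ hP)]⟩

theorem ne_top_of_forall_isCompact_causalDiamond_liftedLE (hrefl : ∀ x, le x x)
    (hvanish : ∀ x y, ¬ le x y → d x y = 0)
    (h : ∀ K : Set (X × ℝ), IsCompact K → IsCompact (causalDiamond (LiftedLE le d) K))
    (x y : X) : d x y ≠ ⊤ := by
  intro htop
  have hxy : le x y := by_contra fun hn => by simp [hvanish x y hn] at htop
  set K : Set (X × ℝ) := {(x, 0), (y, 0)}
  obtain ⟨M, hM⟩ := ((h K K.toFinite.isCompact).image continuous_snd).bddAbove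
  have hmem : (y, max M 0 + 1) ∈ causalDiamond (LiftedLE le d) K :=
    ⟨⟨(x, 0), by simp [K], liftedLE_of_eq_top hxy htop⟩,
      (y, 0), by simp [K], liftedLE_of_le_of_le (hrefl y) (by positivity)⟩
  linarith [hM (mem_image_of_mem Prod.snd hmem), le_max_left M 0]

end LiftedOrder

theorem stmt8_general {X : Type*} [TopologicalSpace X] (le : X → X → Prop)
    (hrefl : ∀ x, le x x)
    (hclosed : IsClosed {p : X × X | le p.1 p.2})
    (d : X → X → ℝ≥0∞)
    (husc : UpperSemicontinuous (fun p : X × X => d p.1 p.2))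
    (hvanish : ∀ x y, ¬ le x y → d x y = 0)
    (R : X × ℝ → X × ℝ → Prop)
    (hR : ∀ P Q : X × ℝ, R P Q ↔ le P.1 Q.1 ∧ (Q.2 : EReal) ≤ (P.2 : EReal) + (d P.1 Q.1 : EReal)) :
    ((∀ C : Set X, IsCompact C →
        IsCompact {y : X | (∃ x ∈ C, le x y) ∧ (∃ z ∈ C, le y z)}) ∧ (∀ x y, d x y ≠ ⊤)) ↔
    (∀ K : Set (X × ℝ), IsCompact K →
        IsCompact {Q : X × ℝ | (∃ P ∈ K, R P Q) ∧ (∃ S ∈ K, R Q S)}) := by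
  obtain rfl : R = LiftedLE le d := funext₂ fun P Q => propext (hR P Q)
  constructor
  · rintro ⟨hJ, hfin⟩ K hK
    exact isCompact_causalDiamond_liftedLE hrefl hclosed husc hJ hfin hK
  · intro h
    refine ⟨fun C hC => ?_, ne_top_of_forall_isCompact_causalDiamond_liftedLE hrefl hvanish h⟩
    rw [← causalDiamond, causalDiamond_eq_image_fst_causalDiamond_liftedLE (d := d)]
    exact (h _ (hC.prod isCompact_singleton)).image continuous_fst

theorem stmt8 {X : Type*} [TopologicalSpace X] (le : X → X → Prop)
    (hrefl : ∀ x, le x x) (htrans : ∀ x y z, le x y → le y z → le x z)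
    (hanti : ∀ x y, le x y → le y x → x = y)
    (hclosed : IsClosed {p : X × X | le p.1 p.2})
    (d : X → X → ℝ≥0∞)
    (husc : UpperSemicontinuous (fun p : X × X => d p.1 p.2))
    (hvanish : ∀ x y, ¬ le x y → d x y = 0)
    (hrev : ∀ x y z, le x y → le y z → d x y + d y z ≤ d x z)
    (hdiag : ∀ x, d x x = 0)
    (R : X × ℝ → X × ℝ → Prop)
    (hR : ∀ P Q : X × ℝ, R P Q ↔ le P.1 Q.1 ∧ (Q.2 : EReal) ≤ (P.2 : EReal) + (d P.1 Q.1 : EReal)) :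
    ((∀ C : Set X, IsCompact C →
        IsCompact {y : X | (∃ x ∈ C, le x y) ∧ (∃ z ∈ C, le y z)}) ∧ (∀ x y, d x y ≠ ⊤)) ↔
    (∀ K : Set (X × ℝ), IsCompact K →
        IsCompact {Q : X × ℝ | (∃ P ∈ K, R P Q) ∧ (∃ S ∈ K, R Q S)}) :=
  stmt8_general le hrefl hclosed d husc hvanish R hR
end

section
/- Let M_k = (X_k, 𝒯_k, ≤_k, d_k), k in a finite index set A, be spacetimes with finite distances d_k, and let p ∈ (0,1]. On X = Π_k X_k with the product topology and product order, define d(x,y) := (Σ_k d_k(x_k,y_k)^p)^{1/p} when x ≤ y and d(x,y) := 0 otherwise. Then d satisfies the reverse triangle inequality d(x,y) + d(y,z) ≤ d(x,z) for all x ≤ y ≤ z, and d is upper semi-continuous on X × X. -/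
/-!
The reverse Minkowski inequality for `p ∈ (0, 1]` is Minkowski's inequality with exponent
`1 / p ≥ 1` for the finitely many vectors `(f k ^ p, g k ^ p)` in the plane; combined with the
componentwise reverse triangle inequality and monotonicity of `t ↦ t ^ p` it gives the reverse
triangle inequality of the product distance. That distance is the indicator of the closed set
`{x ≤ y}` applied to an upper semicontinuous `ℓ^p` combination, and such an indicator of a
nonnegative function is again upper semicontinuous.
-/

open scoped ENNReal

namespace ENNReal

theorem Lp_pair_sum_le {ι : Type*} {q : ℝ} (hq : 1 ≤ q) (s : Finset ι) (a b : ι → ℝ≥0∞) :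
    ((∑ k ∈ s, a k) ^ q + (∑ k ∈ s, b k) ^ q) ^ (1 / q) ≤
      ∑ k ∈ s, (a k ^ q + b k ^ q) ^ (1 / q) := by
  have hq0 : 0 < q := zero_lt_one.trans_le hq
  have key := Finset.le_sum_of_subadditive
    (fun x : ℝ≥0∞ × ℝ≥0∞ => (x.1 ^ q + x.2 ^ q) ^ (1 / q))
    (by simp [zero_rpow_of_pos hq0, hq0])
    (fun x y => by
      simpa [Fintype.sum_bool] using
        Lp_add_le Finset.univ (fun i => cond i x.1 x.2) (fun i => cond i y.1 y.2) hq)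
    s (fun k => (a k, b k))
  simpa only [Prod.fst_sum, Prod.snd_sum] using key

theorem reverse_Lp_add_le {ι : Type*} {p : ℝ} (hp0 : 0 < p) (hp1 : p ≤ 1) (s : Finset ι)
    (f g : ι → ℝ≥0∞) :
    (∑ k ∈ s, f k ^ p) ^ (1 / p) + (∑ k ∈ s, g k ^ p) ^ (1 / p) ≤
      (∑ k ∈ s, (f k + g k) ^ p) ^ (1 / p) := by
  have hq : 1 ≤ 1 / p := by rw [le_div_iff₀ hp0]; linarith
  have rpow_rpow_one_div : ∀ x : ℝ≥0∞, (x ^ p) ^ (1 / p) = x := fun x => by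
    rw [← rpow_mul, mul_one_div_cancel hp0.ne', rpow_one]
  have minkowski := Lp_pair_sum_le hq s (fun k => f k ^ p) (fun k => g k ^ p)
  rw [one_div_one_div] at minkowski
  simp only [rpow_rpow_one_div] at minkowski
  calc _ = (((∑ k ∈ s, f k ^ p) ^ (1 / p) + (∑ k ∈ s, g k ^ p) ^ (1 / p)) ^ p) ^ (1 / p) :=
        (rpow_rpow_one_div _).symm
    _ ≤ _ := by gcongr

end ENNReal

theorem UpperSemicontinuous.indicator_of_isClosed {α β : Type*} [TopologicalSpace α]
    [Preorder β] [Zero β] {f : α → β} {s : Set α} (hf : UpperSemicontinuous f)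
    (hf₀ : ∀ x, 0 ≤ f x) (hs : IsClosed s) : UpperSemicontinuous (s.indicator f) := by
  intro x y hy
  by_cases hx : x ∈ s
  · rw [Set.indicator_of_mem hx] at hy
    filter_upwards [hf x y hy] with x' hx'
    exact (Set.indicator_le_self' (fun x _ => hf₀ x) x').trans_lt hx'
  · rw [Set.indicator_of_notMem hx] at hy
    filter_upwards [hs.isOpen_compl.mem_nhds hx] with x' hx'
    rwa [Set.indicator_of_notMem hx']

theorem UpperSemicontinuous.Lp_sum {α ι : Type*} [TopologicalSpace α] {p : ℝ} (hp : 0 ≤ p)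
    (s : Finset ι) {f : ι → α → ℝ≥0∞} (hf : ∀ k ∈ s, UpperSemicontinuous (f k)) :
    UpperSemicontinuous fun x => (∑ k ∈ s, f k x ^ p) ^ (1 / p) := by
  have rpow_const {g : α → ℝ≥0∞} {r : ℝ} (hr : 0 ≤ r) (hg : UpperSemicontinuous g) :
      UpperSemicontinuous fun x => g x ^ r :=
    ENNReal.continuous_rpow_const.comp_upperSemicontinuous hg
      fun _ _ h => ENNReal.rpow_le_rpow h hr
  exact rpow_const (by positivity) (upperSemicontinuous_sum fun k hk => rpow_const hp (hf k hk))

theorem isClosed_setOf_pi_rel {ι : Type*} {X : ι → Type*} [∀ k, TopologicalSpace (X k)]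
    {r : ∀ k, X k → X k → Prop} (hr : ∀ k, IsClosed {q : X k × X k | r k q.1 q.2}) :
    IsClosed {q : (∀ k, X k) × (∀ k, X k) | ∀ k, r k (q.1 k) (q.2 k)} := by
  rw [Set.ofPred_forall]
  exact isClosed_iInter fun k =>
    (hr k).preimage (f := fun q : (∀ k, X k) × (∀ k, X k) => (q.1 k, q.2 k)) (by fun_prop)

theorem stmt12_general {A : Type*} [Fintype A] {X : A → Type*} [∀ k, TopologicalSpace (X k)]
    (p : ℝ) (hp0 : 0 < p) (hp1 : p ≤ 1)
    (le : ∀ k, X k → X k → Prop)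
    (htrans : ∀ k x y z, le k x y → le k y z → le k x z)
    (hclosed : ∀ k, IsClosed {q : X k × X k | le k q.1 q.2})
    (d : ∀ k, X k → X k → ℝ≥0∞)
    (husc : ∀ k, UpperSemicontinuous (fun q : X k × X k => d k q.1 q.2))
    (hrev : ∀ k x y z, le k x y → le k y z → d k x y + d k y z ≤ d k x z)
    (leP : (∀ k, X k) → (∀ k, X k) → Prop)
    (hleP : ∀ x y, leP x y ↔ ∀ k, le k (x k) (y k))
    (dP : (∀ k, X k) → (∀ k, X k) → ℝ≥0∞)
    (hdP₁ : ∀ x y, leP x y → dP x y = (∑ k, (d k (x k) (y k)) ^ p) ^ (1 / p))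
    (hdP₂ : ∀ x y, ¬ leP x y → dP x y = 0) :
    (∀ x y z, leP x y → leP y z → dP x y + dP y z ≤ dP x z) ∧
    UpperSemicontinuous (fun q : (∀ k, X k) × (∀ k, X k) => dP q.1 q.2) := by
  constructor
  · intro x y z hxy hyz
    rw [hleP] at hxy hyz
    have hxz : leP x z := (hleP x z).2 fun k => htrans k _ _ _ (hxy k) (hyz k)
    rw [hdP₁ x y ((hleP x y).2 hxy), hdP₁ y z ((hleP y z).2 hyz), hdP₁ x z hxz]
    refine (ENNReal.reverse_Lp_add_le hp0 hp1 _ _ _).trans ?_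
    gcongr with k
    exact hrev k _ _ _ (hxy k) (hyz k)
  · have hdP : (fun q : (∀ k, X k) × (∀ k, X k) => dP q.1 q.2) =
        {q | leP q.1 q.2}.indicator fun q => (∑ k, d k (q.1 k) (q.2 k) ^ p) ^ (1 / p) := by
      ext q
      by_cases hq : leP q.1 q.2
      · simp [hq, hdP₁]
      · simp [hq, hdP₂]
    rw [hdP]
    refine UpperSemicontinuous.indicator_of_isClosed ?_ (fun _ => zero_le) ?_
    · exact UpperSemicontinuous.Lp_sum hp0.le _ fun k _ =>
        (husc k).comp (g := fun q : (∀ k, X k) × (∀ k, X k) => (q.1 k, q.2 k)) (by fun_prop)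
    · simpa only [hleP] using isClosed_setOf_pi_rel hclosed

theorem stmt12 {A : Type*} [Fintype A] {X : A → Type*} [∀ k, TopologicalSpace (X k)]
    (p : ℝ) (hp0 : 0 < p) (hp1 : p ≤ 1)
    (le : ∀ k, X k → X k → Prop)
    (hrefl : ∀ k x, le k x x)
    (htrans : ∀ k x y z, le k x y → le k y z → le k x z)
    (hclosed : ∀ k, IsClosed {q : X k × X k | le k q.1 q.2})
    (d : ∀ k, X k → X k → ℝ≥0∞)
    (hfin : ∀ k x y, d k x y ≠ ⊤)
    (husc : ∀ k, UpperSemicontinuous (fun q : X k × X k => d k q.1 q.2))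
    (hvanish : ∀ k x y, ¬ le k x y → d k x y = 0)
    (hrev : ∀ k x y z, le k x y → le k y z → d k x y + d k y z ≤ d k x z)
    (leP : (∀ k, X k) → (∀ k, X k) → Prop)
    (hleP : ∀ x y, leP x y ↔ ∀ k, le k (x k) (y k))
    (dP : (∀ k, X k) → (∀ k, X k) → ℝ≥0∞)
    (hdP₁ : ∀ x y, leP x y → dP x y = (∑ k, (d k (x k) (y k)) ^ p) ^ (1 / p))
    (hdP₂ : ∀ x y, ¬ leP x y → dP x y = 0) :
    (∀ x y z, leP x y → leP y z → dP x y + dP y z ≤ dP x z) ∧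
    UpperSemicontinuous (fun q : (∀ k, X k) × (∀ k, X k) => dP q.1 q.2) :=
  stmt12_general p hp0 hp1 le htrans hclosed d husc hrev leP hleP dP hdP₁ hdP₂
end

section
/- Let ℱ be a point-distinguishing family of real functions on X, closed under multiplication by scalars λ ≥ 1 (λℱ ⊆ ℱ). With ≤ and d defined from ℱ as x ≤ y iff f(x) ≤ f(y) for all f ∈ ℱ and d(x,y) = max{0, inf_ℱ [f(y)-f(x)]}, the time separation τ (equal to d on ≤ and -∞ otherwise) satisfies τ(x,y) = inf_{f∈ℱ} [f(y) - f(x)] for all x, y ∈ X (with value -∞ when x ≰ y). Moreover, the lifted relation satisfies (x,a) ≤↓ (y,b) iff f(x) - a ≤ f(y) - b for every f ∈ ℱ. -/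
private lemma aux_le_add {a b : ℝ} {t : EReal} :
    (b : EReal) ≤ (a : EReal) + t ↔ ((b - a : ℝ) : EReal) ≤ t := by
  induction t using EReal.rec with
  | bot => rw [EReal.add_bot]; simp [le_bot_iff, ← EReal.coe_sub]
  | coe r =>
      rw [← EReal.coe_add, EReal.coe_le_coe_iff, EReal.coe_le_coe_iff]
      constructor <;> intro <;> linarith
  | top => simp [EReal.add_top_of_ne_bot (by simp : (a : EReal) ≠ ⊥)]

theorem stmt14 {X : Type*} (F : Set (X → ℝ))
    (hsep : ∀ x y : X, (∀ f ∈ F, f x = f y) → x = y)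
    (hscale : ∀ f ∈ F, ∀ lam : ℝ, 1 ≤ lam → (fun x => lam * f x) ∈ F)
    (le : X → X → Prop) (hle : ∀ x y, le x y ↔ ∀ f ∈ F, f x ≤ f y)
    (d : X → X → EReal)
    (hd : ∀ x y, d x y = max 0 (⨅ f ∈ F, ((f y - f x : ℝ) : EReal)))
    (τ : X → X → EReal)
    (hτ₁ : ∀ x y, le x y → τ x y = d x y)
    (hτ₂ : ∀ x y, ¬ le x y → τ x y = ⊥)
    (R : X × ℝ → X × ℝ → Prop)
    (hR : ∀ P Q : X × ℝ, R P Q ↔ (Q.2 : EReal) ≤ (P.2 : EReal) + τ P.1 Q.1) :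
    (∀ x y, τ x y = ⨅ f ∈ F, ((f y - f x : ℝ) : EReal)) ∧
    (∀ (x y : X) (a b : ℝ), R (x, a) (y, b) ↔ ∀ f ∈ F, f x - a ≤ f y - b) := by
  have key : ∀ x y, τ x y = ⨅ f ∈ F, ((f y - f x : ℝ) : EReal) := by
    intro x y
    by_cases h : le x y
    · rw [hτ₁ x y h, hd]
      refine max_eq_right ?_
      refine le_iInf₂ fun f hf => ?_
      exact_mod_cast sub_nonneg.mpr ((hle x y).mp h f hf)
    · rw [hτ₂ x y h]
      symm
      rw [EReal.eq_bot_iff_forall_lt]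
      intro M
      obtain ⟨f, hf, hfxy⟩ : ∃ f ∈ F, ¬ f x ≤ f y := by
        by_contra hc; push_neg at hc; exact h ((hle x y).mpr hc)
      push_neg at hfxy
      have hε : f y - f x < 0 := by linarith
      set lam : ℝ := max 1 ((M - 1) / (f y - f x)) with hlam
      have hlam1 : 1 ≤ lam := le_max_left _ _
      have hmem := hscale f hf lam hlam1
      have hval : lam * (f y - f x) ≤ M - 1 := by
        have : (M - 1) / (f y - f x) ≤ lam := le_max_right _ _
        calc lam * (f y - f x) ≤ ((M - 1) / (f y - f x)) * (f y - f x) := by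
              exact mul_le_mul_of_nonpos_right this (le_of_lt hε)
          _ = M - 1 := div_mul_cancel₀ _ (ne_of_lt hε)
      have hle2 : (⨅ f ∈ F, ((f y - f x : ℝ) : EReal)) ≤ ((lam * f y - lam * f x : ℝ) : EReal) :=
        iInf₂_le (fun z => lam * f z) hmem
      refine lt_of_le_of_lt hle2 ?_
      rw [EReal.coe_lt_coe_iff]
      have : lam * f y - lam * f x = lam * (f y - f x) := by ring
      linarith [this ▸ hval]
  refine ⟨key, fun x y a b => ?_⟩
  rw [hR, key]
  simp only
  rw [aux_le_add, le_iInf₂_iff]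
  constructor
  · intro h f hf
    have := h f hf
    rw [EReal.coe_le_coe_iff] at this
    linarith
  · intro h f hf
    rw [EReal.coe_le_coe_iff]
    have := h f hf
    linarith
end

section
/- Let ℱ be a point-distinguishing family of real functions on X inducing the spacetime (X, 𝒯_ℱ, ≤_ℱ, d_ℱ), and let ℛ be the set of all 𝒯_ℱ-continuous d_ℱ-rushing functions. Then ℱ ⊆ ℛ, the initial topology of ℛ equals 𝒯_ℱ, the order induced by ℛ equals ≤_ℱ, and the Lorentzian distance induced by ℛ equals d_ℱ. -/
/-!
Each `f ∈ ℱ` is rushing, because `d_ℱ(x, y) ≤ f y - f x` whenever `f x ≤ f y`; hence `ℱ ⊆ ℛ`, and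
the structures induced by `ℛ` are at least as strong as those induced by `ℱ`. Conversely every
`g ∈ ℛ` is `𝒯_ℱ`-continuous, is `≤_ℱ`-isotone since `d_ℱ ≥ 0`, and satisfies `d_ℱ(x, y) ≤ g y - g x`
for `x ≤_ℱ y`, while `d_ℱ(x, y) = 0` otherwise; so `ℛ` induces nothing stronger.
-/

open Topology

theorem EReal.coe_add_le_coe_iff_le_coe_sub {a b : ℝ} {e : EReal} :
    (a : EReal) + e ≤ b ↔ e ≤ ((b - a : ℝ) : EReal) := by
  rw [EReal.coe_sub, EReal.le_sub_iff_add_le (Or.inl (EReal.coe_ne_bot _))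
    (Or.inl (EReal.coe_ne_top _)), add_comm]

theorem iInf_induced_eq_of_subset {X : Type*} {F R : Set (X → ℝ)} (hFR : F ⊆ R)
    (hR : ∀ g ∈ R, Continuous[⨅ f ∈ F, .induced f inferInstance, _] g) :
    ⨅ f ∈ F, TopologicalSpace.induced f inferInstance =
      ⨅ g ∈ R, TopologicalSpace.induced g inferInstance :=
  le_antisymm (le_iInf₂ fun g hg => continuous_iff_le_induced.1 (hR g hg))
    (le_iInf₂ fun f hf => iInf₂_le f (hFR hf))

section InducedDist

variable {X : Type*} {F R : Set (X → ℝ)} {f g : X → ℝ} {x y : X}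

noncomputable def inducedDist (F : Set (X → ℝ)) (x y : X) : EReal :=
  max 0 (⨅ f ∈ F, ((f y - f x : ℝ) : EReal))

def IsRushing (F : Set (X → ℝ)) (g : X → ℝ) : Prop :=
  ∀ x y, (∀ f ∈ F, f x ≤ f y) → (g x : EReal) + inducedDist F x y ≤ g y

theorem inducedDist_nonneg : 0 ≤ inducedDist F x y :=
  le_max_left _ _

theorem inducedDist_le_sub (hf : f ∈ F) (h : f x ≤ f y) :
    inducedDist F x y ≤ ((f y - f x : ℝ) : EReal) :=
  max_le (EReal.coe_nonneg.2 (sub_nonneg.2 h)) (iInf₂_le f hf)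

theorem inducedDist_eq_zero_of_le (hf : f ∈ F) (h : f y ≤ f x) : inducedDist F x y = 0 :=
  max_eq_left ((iInf₂_le f hf).trans (EReal.coe_nonpos.2 (sub_nonpos.2 h)))

theorem inducedDist_anti (hFR : F ⊆ R) : inducedDist R x y ≤ inducedDist F x y :=
  max_le_max le_rfl (le_iInf₂ fun f hf => iInf₂_le f (hFR hf))

theorem isRushing_of_mem (hf : f ∈ F) : IsRushing F f := fun _ _ hxy =>
  EReal.coe_add_le_coe_iff_le_coe_sub.2 (inducedDist_le_sub hf (hxy f hf))

theorem IsRushing.le (hg : IsRushing F g) (hxy : ∀ f ∈ F, f x ≤ f y) : g x ≤ g y :=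
  EReal.coe_le_coe_iff.1 (le_add_of_nonneg_right inducedDist_nonneg |>.trans (hg x y hxy))

theorem IsRushing.inducedDist_le_sub (hg : IsRushing F g) (hxy : ∀ f ∈ F, f x ≤ f y) :
    inducedDist F x y ≤ ((g y - g x : ℝ) : EReal) :=
  EReal.coe_add_le_coe_iff_le_coe_sub.1 (hg x y hxy)

theorem forall_le_iff_of_subset (hFR : F ⊆ R) (hR : ∀ g ∈ R, IsRushing F g) :
    (∀ f ∈ F, f x ≤ f y) ↔ ∀ g ∈ R, g x ≤ g y :=
  ⟨fun hxy g hg => (hR g hg).le hxy, fun h f hf => h f (hFR hf)⟩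

theorem inducedDist_eq_of_subset (hFR : F ⊆ R) (hR : ∀ g ∈ R, IsRushing F g) :
    inducedDist R x y = inducedDist F x y := by
  refine le_antisymm (inducedDist_anti hFR) ?_
  by_cases hxy : ∀ f ∈ F, f x ≤ f y
  · exact le_max_of_le_right (le_iInf₂ fun g hg => (hR g hg).inducedDist_le_sub hxy)
  · push Not at hxy
    obtain ⟨f, hf, hlt⟩ := hxy
    rw [inducedDist_eq_zero_of_le hf hlt.le]
    exact inducedDist_nonneg

end InducedDist

theorem stmt17_general {X : Type*} (F : Set (X → ℝ))
    [T : TopologicalSpace X]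
    (hT : T = ⨅ f ∈ F, TopologicalSpace.induced f inferInstance)
    (le : X → X → Prop) (hle : ∀ x y, le x y ↔ ∀ f ∈ F, f x ≤ f y)
    (d : X → X → EReal)
    (hd : ∀ x y, d x y = max 0 (⨅ f ∈ F, ((f y - f x : ℝ) : EReal)))
    (R : Set (X → ℝ))
    (hR : ∀ g, g ∈ R ↔ Continuous g ∧
        ∀ x y, le x y → (g x : EReal) + d x y ≤ (g y : EReal)) :
    F ⊆ R ∧
    (T = ⨅ g ∈ R, TopologicalSpace.induced g inferInstance) ∧
    (∀ x y, le x y ↔ ∀ g ∈ R, g x ≤ g y) ∧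
    (∀ x y, d x y = max 0 (⨅ g ∈ R, ((g y - g x : ℝ) : EReal))) := by
  obtain rfl : le = fun x y => ∀ f ∈ F, f x ≤ f y := funext₂ fun x y => propext (hle x y)
  obtain rfl : d = inducedDist F := funext₂ hd
  subst hT
  have hFR : F ⊆ R := fun f hf =>
    (hR f).2 ⟨continuous_iff_le_induced.2 (iInf₂_le f hf), isRushing_of_mem hf⟩
  have hRush : ∀ g ∈ R, IsRushing F g := fun g hg => ((hR g).1 hg).2
  exact ⟨hFR, iInf_induced_eq_of_subset hFR fun g hg => ((hR g).1 hg).1,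
    fun x y => forall_le_iff_of_subset hFR hRush,
    fun x y => (inducedDist_eq_of_subset hFR hRush).symm⟩

theorem stmt17 {X : Type*} (F : Set (X → ℝ))
    (hsep : ∀ x y : X, (∀ f ∈ F, f x = f y) → x = y)
    [T : TopologicalSpace X]
    (hT : T = ⨅ f ∈ F, TopologicalSpace.induced f inferInstance)
    (le : X → X → Prop) (hle : ∀ x y, le x y ↔ ∀ f ∈ F, f x ≤ f y)
    (d : X → X → EReal)
    (hd : ∀ x y, d x y = max 0 (⨅ f ∈ F, ((f y - f x : ℝ) : EReal)))
    (R : Set (X → ℝ))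
    (hR : ∀ g, g ∈ R ↔ Continuous g ∧
        ∀ x y, le x y → (g x : EReal) + d x y ≤ (g y : EReal)) :
    F ⊆ R ∧
    (T = ⨅ g ∈ R, TopologicalSpace.induced g inferInstance) ∧
    (∀ x y, le x y ↔ ∀ g ∈ R, g x ≤ g y) ∧
    (∀ x y, d x y = max 0 (⨅ g ∈ R, ((g y - g x : ℝ) : EReal))) :=
  stmt17_general F (T := T) hT le hle d hd R hR
end
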